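/- arXiv:2212.07577 — 7 statements merged into one kernel-verified Lean document; each statement's English description precedes it below -/
import Mathlib

section
/- Let M ∈ M_n(ℝ) be an expansive real matrix, D ⊂ ℝⁿ a finite set, and A ∈ M_n(ℝ) an invertible matrix. Let μ_{A,M,D} := (A⁻¹)_*(δ_D * μ_{M,D}) be the pushforward under x ↦ A⁻¹x of the convolution of the uniform measure on D with μ_{M,D}. Then: (a) μ_{M,D} is the pushforward of μ_{A,M,D} under the map x ↦ M⁻¹Ax; and (b) for any countable Λ ⊂ ℝⁿ, (μ_{M,D}, Λ) is a spectral pair if and only if (μ_{A,M,D}, A*M^{*−1}Λ) is a spectral pair (where * denotes matrix transpose). -/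
open MeasureTheory Matrix Complex
open scoped ENNReal

noncomputable section

/-- The exponential function `x ↦ e^{2πi⟨l,x⟩}` on `Fin n → ℝ`. -/
def expChar {n : ℕ} (l x : Fin n → ℝ) : ℂ :=
  Complex.exp (2 * Real.pi * Complex.I * Complex.ofReal (∑ i, l i * x i))

/-- `Λ` is an orthogonal set of `μ`: the exponentials `e^{2πi⟨λ,·⟩}`, `λ ∈ Λ`,
form an orthonormal family in `L²(μ)`. -/
def IsOrthogonalSet {n : ℕ} (μ : Measure (Fin n → ℝ)) (Λ : Set (Fin n → ℝ)) : Prop :=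
  ∃ b : Λ → Lp ℂ 2 μ,
    (∀ l : Λ, (b l : (Fin n → ℝ) → ℂ) =ᵐ[μ] expChar (l : Fin n → ℝ)) ∧
    Orthonormal ℂ b

/-- `Λ` is a spectrum of `μ`: the exponentials `e^{2πi⟨λ,·⟩}`, `λ ∈ Λ`,
form an orthonormal basis (orthonormal and total) of `L²(μ)`. -/
def IsSpectrum {n : ℕ} (μ : Measure (Fin n → ℝ)) (Λ : Set (Fin n → ℝ)) : Prop :=
  ∃ b : Λ → Lp ℂ 2 μ,
    (∀ l : Λ, (b l : (Fin n → ℝ) → ℂ) =ᵐ[μ] expChar (l : Fin n → ℝ)) ∧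
    Orthonormal ℂ b ∧
    (Submodule.span ℂ (Set.range b)).topologicalClosure = ⊤

/-- `μ` is a spectral measure : some countable `Λ` is a spectrum of `μ`. -/
def IsSpectralMeasure {n : ℕ} (μ : Measure (Fin n → ℝ)) : Prop :=
  ∃ Λ : Set (Fin n → ℝ), Λ.Countable ∧ IsSpectrum μ Λ

/-- A real matrix is expansive if all of its (complex) eigenvalues have modulus `> 1`. -/
def Expansive {n : ℕ} (M : Matrix (Fin n) (Fin n) ℝ) : Prop :=
  ∀ z : ℂ, (M.map (Complex.ofReal)).charpoly.IsRoot z → 1 < ‖z‖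

/-- `μ` is the self-affine measure associated with `(M, D)`: a compactly supported
Borel probability measure satisfying `μ = (1/#D) ∑_{d ∈ D} μ ∘ φ_d⁻¹`,
where `φ_d x = M⁻¹(x + d)`. -/
def IsSelfAffineMeasure {n : ℕ} (M : Matrix (Fin n) (Fin n) ℝ) (D : Finset (Fin n → ℝ))
    (μ : Measure (Fin n → ℝ)) : Prop :=
  IsProbabilityMeasure μ ∧
  (∃ K : Set (Fin n → ℝ), IsCompact K ∧ μ Kᶜ = 0) ∧
  μ = (D.card : ℝ≥0∞)⁻¹ • ∑ d ∈ D, μ.map (fun x => M⁻¹.mulVec (x + d))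

/-- Coordinatewise cast of an integer vector to a real vector. -/
def intCast {n : ℕ} (v : Fin n → ℤ) : Fin n → ℝ := fun i => (v i : ℝ)

/-- The matrix `H = N^{-1/2} (e^{2πi⟨M⁻¹d, s⟩})_{d ∈ D, s ∈ S}`. -/
def hadamardH {n : ℕ} (M : Matrix (Fin n) (Fin n) ℤ) (D S : Finset (Fin n → ℤ)) :
    Matrix D S ℂ := fun d s =>
  (Real.sqrt (D.card) : ℂ)⁻¹ *
    Complex.exp (2 * Real.pi * Complex.I *
      Complex.ofReal (∑ i, ((M.map (Int.cast : ℤ → ℝ))⁻¹.mulVec (intCast d.1)) i * ((s.1 i : ℝ))))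

/-- `(M, D, S)` is a Hadamard triple: `#D = #S` and
`H = N^{-1/2}(e^{2πi⟨M⁻¹d,s⟩})` is unitary. -/
def IsHadamardTriple {n : ℕ} (M : Matrix (Fin n) (Fin n) ℤ) (D S : Finset (Fin n → ℤ)) :
    Prop :=
  D.card = S.card ∧ (hadamardH M D S)ᴴ * hadamardH M D S = 1

/-- `(M, D)` is admissible: there is `S ⊂ ℤⁿ` such that `(M, D, S)` is a Hadamard triple. -/
def IsAdmissible {n : ℕ} (M : Matrix (Fin n) (Fin n) ℤ) (D : Finset (Fin n → ℤ)) : Prop :=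
  ∃ S : Finset (Fin n → ℤ), IsHadamardTriple M D S

/-- The mask polynomial `m_D(x) = (1/#D) ∑_{d∈D} e^{2πi⟨d,x⟩}` of a finite set `D`. -/
def maskPoly {n : ℕ} (D : Finset (Fin n → ℝ)) (x : Fin n → ℝ) : ℂ :=
  (D.card : ℂ)⁻¹ * ∑ d ∈ D, Complex.exp (2 * Real.pi * Complex.I * Complex.ofReal (∑ i, d i * x i))

/-- The Fourier transform `μ̂(ξ) = ∫ e^{2πi⟨x,ξ⟩} dμ(x)`. -/
def fourierMeasure {n : ℕ} (μ : Measure (Fin n → ℝ)) (ξ : Fin n → ℝ) : ℂ :=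
  ∫ x, expChar ξ x ∂μ

/-!
By the self-affine identity `μ = (M⁻¹)_*(δ_D * μ)`, the measure `μ_{A,M,D}` is the image of
`μ` under the invertible linear map `A⁻¹M`; equivalently `μ = T_* μ_{A,M,D}` with `T = M⁻¹A`,
which is (a). For an invertible linear `T` with `T_* ρ = ν`, composition with `T` is a unitary
`L²(ν) → L²(ρ)` sending `e^{2πi⟨λ,·⟩}` to `e^{2πi⟨Tᵀλ,·⟩}`, so `Λ` is a spectrum of `ν` iff
`TᵀΛ` is a spectrum of `ρ`; with `Tᵀ = AᵀM^{*-1}` this is (b).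
-/

open Function Set

theorem Submodule.topologicalClosure_span_range_equiv_comp_eq_top {𝕜 E F ι ι' : Type*}
    [NormedField 𝕜] [NormedAddCommGroup E] [NormedSpace 𝕜 E] [NormedAddCommGroup F]
    [NormedSpace 𝕜 F] (e : E ≃L[𝕜] F) {v : ι → E}
    (hv : (Submodule.span 𝕜 (range v)).topologicalClosure = ⊤) (τ : ι' ≃ ι) :
    (Submodule.span 𝕜 (range (e ∘ v ∘ τ))).topologicalClosure = ⊤ := by
  rw [range_comp, τ.surjective.range_comp]
  change (span 𝕜 (((e : E →L[𝕜] F) : E →ₗ[𝕜] F) '' range v)).topologicalClosure = ⊤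
  rw [← Submodule.map_span]
  exact e.surjective.denseRange.topologicalClosure_map_submodule hv

namespace MeasureTheory

theorem Measure.finset_sum_conv {G ι : Type*} [AddMonoid G] [MeasurableSpace G]
    [MeasurableAdd₂ G] (s : Finset ι) (m : ι → Measure G) [∀ i, SFinite (m i)]
    (ν : Measure G) [SFinite ν] :
    (∑ i ∈ s, m i) ∗ ν = ∑ i ∈ s, m i ∗ ν := by
  classical
  induction s using Finset.induction_on with
  | empty => simp
  | insert a s ha ih =>
    have : SFinite (∑ i ∈ s, m i) := by rw [← Measure.sum_coe_finset]; infer_instance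
    rw [Finset.sum_insert ha, Finset.sum_insert ha, add_conv, ih]

variable {α β E : Type*} {mα : MeasurableSpace α} {mβ : MeasurableSpace β}
  {μ : Measure α} {ν : Measure β} [NormedAddCommGroup E] {p : ℝ≥0∞} [Fact (1 ≤ p)]

def Lp.compMeasurableEquivₗᵢ (𝕜 : Type*) [NormedRing 𝕜] [Module 𝕜 E] [IsBoundedSMul 𝕜 E]
    (e : α ≃ᵐ β) (he : MeasurePreserving e μ ν) : Lp E p ν ≃ₗᵢ[𝕜] Lp E p μ :=
  LinearIsometryEquiv.ofSurjective (Lp.compMeasurePreservingₗᵢ 𝕜 e he) fun g => by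
    refine ⟨Lp.compMeasurePreserving e.symm he.symm g, Lp.ext ?_⟩
    filter_upwards [Lp.coeFn_compMeasurePreserving (Lp.compMeasurePreserving e.symm he.symm g) he,
      he.quasiMeasurePreserving.ae (Lp.coeFn_compMeasurePreserving g he.symm)] with x h₁ h₂
    exact h₁.trans (h₂.trans (congrArg g (e.symm_apply_apply x)))

end MeasureTheory

theorem Matrix.measurable_mulVec {m : Type*} [Fintype m] (N : Matrix m m ℝ) :
    Measurable (N *ᵥ · : (m → ℝ) → (m → ℝ)) :=
  (continuous_const.matrix_mulVec continuous_id).measurable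

def Matrix.mulVecMeasurableEquiv {m : Type*} [Fintype m] [DecidableEq m] (N : Matrix m m ℝ)
    (hN : IsUnit N) : (m → ℝ) ≃ᵐ (m → ℝ) where
  toFun := (N *ᵥ ·)
  invFun := (N⁻¹ *ᵥ ·)
  left_inv x := by
    change N⁻¹ *ᵥ N *ᵥ x = x
    rw [mulVec_mulVec, nonsing_inv_mul _ ((isUnit_iff_isUnit_det N).mp hN), one_mulVec]
  right_inv x := by
    change N *ᵥ N⁻¹ *ᵥ x = x
    rw [mulVec_mulVec, mul_nonsing_inv _ ((isUnit_iff_isUnit_det N).mp hN), one_mulVec]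
  measurable_toFun := measurable_mulVec N
  measurable_invFun := measurable_mulVec N⁻¹

variable {n : ℕ}

theorem expChar_mulVec (N : Matrix (Fin n) (Fin n) ℝ) (l x : Fin n → ℝ) :
    expChar l (N *ᵥ x) = expChar (Nᵀ *ᵥ l) x := by
  simp only [expChar]
  congr 3
  exact (dotProduct_mulVec l N x).trans (by rw [← mulVec_transpose]; rfl)

theorem IsSpectrum.image_of_measurePreserving {ρ ν : Measure (Fin n → ℝ)}
    (e : (Fin n → ℝ) ≃ᵐ (Fin n → ℝ)) (he : MeasurePreserving e ρ ν)
    {σ : (Fin n → ℝ) → (Fin n → ℝ)} (hσ : Injective σ)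
    (hσe : ∀ l x, expChar l (e x) = expChar (σ l) x) {Λ : Set (Fin n → ℝ)}
    (hΛ : IsSpectrum ν Λ) : IsSpectrum ρ (σ '' Λ) := by
  obtain ⟨b, hb_exp, hb_orth, hb_dense⟩ := hΛ
  let U : Lp ℂ 2 ν ≃ₗᵢ[ℂ] Lp ℂ 2 ρ := Lp.compMeasurableEquivₗᵢ ℂ e he
  let τ : σ '' Λ ≃ Λ := (Equiv.Set.image σ Λ hσ).symm
  refine ⟨U ∘ b ∘ τ, fun l => ?_, (hb_orth.comp_linearIsometryEquiv U).comp τ τ.injective,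
    Submodule.topologicalClosure_span_range_equiv_comp_eq_top U.toContinuousLinearEquiv hb_dense τ⟩
  have hστ : σ (τ l) = l := congrArg Subtype.val ((Equiv.Set.image σ Λ hσ).apply_symm_apply l)
  filter_upwards [Lp.coeFn_compMeasurePreserving (b (τ l)) he,
    he.quasiMeasurePreserving.ae (hb_exp (τ l))] with x h₁ h₂
  exact h₁.trans (h₂.trans (by rw [hσe, hστ]))

theorem isSpectrum_iff_of_measurePreserving_mulVec {N : Matrix (Fin n) (Fin n) ℝ} (hN : IsUnit N)
    {ρ ν : Measure (Fin n → ℝ)} (hNρ : MeasurePreserving (N *ᵥ ·) ρ ν) (Λ : Set (Fin n → ℝ)) :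
    IsSpectrum ν Λ ↔ IsSpectrum ρ ((Nᵀ *ᵥ ·) '' Λ) := by
  let e := N.mulVecMeasurableEquiv hN
  have hNdet : IsUnit N.det := (isUnit_iff_isUnit_det N).mp hN
  have hinj : Injective (Nᵀ *ᵥ ·) :=
    mulVec_injective_iff_isUnit.mpr ((isUnit_transpose N).mpr hN)
  refine ⟨fun h => h.image_of_measurePreserving e hNρ hinj (expChar_mulVec N), fun h => ?_⟩
  have hinv : Injective (N⁻¹ᵀ *ᵥ ·) :=
    mulVec_injective_iff_isUnit.mpr ((isUnit_transpose _).mpr (isUnit_nonsing_inv_iff.mpr hN))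
  have hΛ : (N⁻¹ᵀ *ᵥ ·) '' ((Nᵀ *ᵥ ·) '' Λ) = Λ := by
    rw [image_image]
    simp_rw [mulVec_mulVec, ← transpose_mul, mul_nonsing_inv N hNdet, transpose_one, one_mulVec,
      image_id']
  simpa only [hΛ] using h.image_of_measurePreserving e.symm (hNρ.symm e) hinv (expChar_mulVec N⁻¹)

theorem Expansive.isUnit {M : Matrix (Fin n) (Fin n) ℝ} (hM : Expansive M) : IsUnit M := by
  rw [isUnit_iff_isUnit_det, isUnit_iff_ne_zero]
  intro hdet
  have hdetC : ¬IsUnit (M.map ofReal) := by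
    rw [isUnit_iff_isUnit_det, isUnit_iff_ne_zero, not_not]
    exact (ofRealHom.map_det M).symm.trans (by simp [hdet])
  have hroot := mem_spectrum_iff_isRoot_charpoly.mp (spectrum.zero_mem (R := ℂ) hdetC)
  have h01 := hM 0 hroot
  norm_num at h01

theorem IsSelfAffineMeasure.eq_map_conv {M : Matrix (Fin n) (Fin n) ℝ} {D : Finset (Fin n → ℝ)}
    {μ : Measure (Fin n → ℝ)} (hμ : IsSelfAffineMeasure M D μ) :
    μ = (((D.card : ℝ≥0∞)⁻¹ • ∑ d ∈ D, Measure.dirac d) ∗ μ).map (M⁻¹ *ᵥ ·) := by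
  obtain ⟨_, -, hμ_eq⟩ := hμ
  have hM : Measurable (M⁻¹ *ᵥ · : (Fin n → ℝ) → (Fin n → ℝ)) := measurable_mulVec _
  rw [Measure.conv_smul_left, Measure.finset_sum_conv, Measure.map_smul,
    Measure.map_finset_sum hM.aemeasurable]
  conv_lhs => rw [hμ_eq]
  congr 1
  refine Finset.sum_congr rfl fun d _ => ?_
  rw [Measure.dirac_conv, Measure.map_map hM (measurable_const_add d)]
  simp only [Function.comp_def, add_comm]

theorem moran_measure_spectral_pair_transfer
    (n : ℕ) (M : Matrix (Fin n) (Fin n) ℝ) (hM : Expansive M)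
    (D : Finset (Fin n → ℝ))
    (A : Matrix (Fin n) (Fin n) ℝ) (hA : IsUnit A)
    (μ : Measure (Fin n → ℝ)) (hμ : IsSelfAffineMeasure M D μ)
    (μAMD : Measure (Fin n → ℝ))
    (hAMD : μAMD =
      (((((D.card : ℝ≥0∞)⁻¹ • ∑ d ∈ D, Measure.dirac d).prod μ).map
          (fun p => p.1 + p.2)).map (fun x => A⁻¹.mulVec x))) :
    μ = μAMD.map (fun x => M⁻¹.mulVec (A.mulVec x)) ∧
    ∀ Λ : Set (Fin n → ℝ), Λ.Countable →
      (IsSpectrum μ Λ ↔ IsSpectrum μAMD ((fun v => (Aᵀ * (Mᵀ)⁻¹).mulVec v) '' Λ)) := by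
  have hT : (fun x => M⁻¹ *ᵥ A *ᵥ x) = ((M⁻¹ * A) *ᵥ ·) := funext fun x => mulVec_mulVec x _ _
  have hTμ : MeasurePreserving ((M⁻¹ * A) *ᵥ ·) μAMD μ := by
    refine ⟨measurable_mulVec _, ?_⟩
    have hcomp : ((M⁻¹ * A) *ᵥ ·) ∘ (A⁻¹ *ᵥ ·) = (M⁻¹ *ᵥ ·) := funext fun x => by
      simp [mulVec_mulVec, mul_assoc, mul_nonsing_inv A ((isUnit_iff_isUnit_det A).mp hA)]
    rw [hAMD, Measure.map_map (measurable_mulVec _) (measurable_mulVec _), hcomp]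
    exact hμ.eq_map_conv.symm
  have hT_unit : IsUnit (M⁻¹ * A) := (isUnit_nonsing_inv_iff.mpr hM.isUnit).mul hA
  refine ⟨hT ▸ hTμ.map_eq.symm, fun Λ _ => ?_⟩
  rw [isSpectrum_iff_of_measurePreserving_mulVec hT_unit hTμ, transpose_mul, transpose_nonsing_inv]
end
end

section
/- Let m, n be positive integers, let p_{i,j} (1 ≤ i ≤ m, 1 ≤ j ≤ n) be positive real numbers with Σ_{j=1}^n p_{i,j} = 1 for each i, and let q_{i,j} be nonnegative real numbers with Σ_{i=1}^m max_{1≤j≤n} q_{i,j} ≤ 1. Then Σ_{i=1}^m Σ_{j=1}^n p_{i,j} q_{i,j} = 1 if and only if q_{i,1} = q_{i,2} = ⋯ = q_{i,n} for every 1 ≤ i ≤ m and Σ_{i=1}^m q_{i,1} = 1. -/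
/-- Lemma 2.5 of Deng et al.: if `p i j > 0` with `∑ j, p i j = 1` for each `i`,
and `q i j ≥ 0` with `∑ i, max_j (q i j) ≤ 1`, then `∑ i ∑ j, p i j * q i j = 1`
iff each row of `q` is constant and `∑ i, q i 0 = 1`. -/
theorem sum_product_eq_one_iff_rows_constant
    (m n : ℕ) (hm : 0 < m) (hn : 0 < n)
    (p q : Fin m → Fin n → ℝ)
    (hp : ∀ i j, 0 < p i j) (hpsum : ∀ i, ∑ j, p i j = 1)
    (hq : ∀ i j, 0 ≤ q i j)
    (hqsum : ∑ i, (Finset.univ.sup' ⟨⟨0, hn⟩, Finset.mem_univ _⟩ (q i)) ≤ 1) :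
    (∑ i, ∑ j, p i j * q i j = 1) ↔
      ((∀ i, ∀ j j' : Fin n, q i j = q i j') ∧ ∑ i, q i ⟨0, hn⟩ = 1) := by
  set e : Fin n := ⟨0, hn⟩ with he
  set c : Fin m → ℝ := fun i => Finset.univ.sup' ⟨e, Finset.mem_univ _⟩ (q i) with hc
  have hle : ∀ i j, q i j ≤ c i := fun i j => Finset.le_sup' _ (Finset.mem_univ j)
  have hinner : ∀ i, ∑ j, p i j * q i j ≤ c i := by
    intro i
    calc ∑ j, p i j * q i j ≤ ∑ j, p i j * c i :=
          Finset.sum_le_sum (fun j _ => mul_le_mul_of_nonneg_left (hle i j) (hp i j).le)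
      _ = c i := by rw [← Finset.sum_mul, hpsum i, one_mul]
  constructor
  · intro h
    have hsum_eq : ∀ i, ∑ j, p i j * q i j = c i := by
      by_contra hcon
      push_neg at hcon
      obtain ⟨i0, hi0⟩ := hcon
      have hlt : ∑ i, ∑ j, p i j * q i j < ∑ i, c i :=
        Finset.sum_lt_sum (fun i _ => hinner i)
          ⟨i0, Finset.mem_univ _, lt_of_le_of_ne (hinner i0) hi0⟩
      linarith
    have hqc : ∀ i j, q i j = c i := by
      intro i j
      by_contra hne
      have hlt : q i j < c i := lt_of_le_of_ne (hle i j) hne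
      have hlt2 : ∑ j', p i j' * q i j' < ∑ j', p i j' * c i :=
        Finset.sum_lt_sum (fun j' _ => mul_le_mul_of_nonneg_left (hle i j') (hp i j').le)
          ⟨j, Finset.mem_univ _, by nlinarith [hp i j]⟩
      rw [← Finset.sum_mul, hpsum i, one_mul] at hlt2
      linarith [hsum_eq i]
    refine ⟨fun i j j' => by rw [hqc i j, hqc i j'], ?_⟩
    have h1 : ∑ i, q i e = ∑ i, c i := Finset.sum_congr rfl (fun i _ => hqc i e)
    have h2 : ∑ i, c i = ∑ i, ∑ j, p i j * q i j :=
      Finset.sum_congr rfl (fun i _ => (hsum_eq i).symm)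
    rw [h1, h2, h]
  · rintro ⟨hconst, hsum⟩
    have key : ∀ i, ∑ j, p i j * q i j = q i e := by
      intro i
      calc ∑ j, p i j * q i j = ∑ j, p i j * q i e :=
            Finset.sum_congr rfl (fun j _ => by rw [hconst i j e])
        _ = q i e := by rw [← Finset.sum_mul, hpsum i, one_mul]
    rw [Finset.sum_congr rfl (fun i _ => key i), hsum]
end

section
/- Let α, β be odd integers, ω ∈ ℤ, η ≥ 0 an integer, and let D̃ = {(0,0)ᵗ, (α,0)ᵗ, (ω, 2^η β)ᵗ, (−α−ω, −2^η β)ᵗ} ⊂ ℤ². Then the zero set of the mask polynomial of D̃ satisfies Z(m_D̃) = Θ₁ ∪ Θ₂ ∪ Θ₃. -/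
open MeasureTheory Matrix Complex
open scoped ENNReal

noncomputable section

/-- The sets `Θ₀, Θ₁, Θ₂, Θ₃` associated with odd integers `α, β`, `ω ∈ ℤ` and `η ≥ 0`:
`Θᵢ = {(2^η(2k+δᵢ)β, (2k'+εᵢ)α − (2k+δᵢ)ω)ᵗ/(2^{η+1}αβ) : k, k' ∈ ℤ}` where
`δᵢ = i % 2` and `εᵢ = i / 2`. -/
def thetaSet (α β ω : ℤ) (η : ℕ) (i : Fin 4) : Set (Fin 2 → ℝ) :=
  { v | ∃ k k' : ℤ, v = ((2 : ℝ) ^ (η + 1) * (α : ℝ) * (β : ℝ))⁻¹ •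
      intCast ![2 ^ η * (2 * k + ((i.val % 2 : ℕ) : ℤ)) * β,
        (2 * k' + ((i.val / 2 : ℕ) : ℤ)) * α - (2 * k + ((i.val % 2 : ℕ) : ℤ)) * ω] }

/-!
Put `u = α x₀` and `v = ω x₀ + 2^η β x₁`, so that `4 m_D̃(x) = 1 + e(u) + e(v) + e(-u-v)` with
`e(t) = e^{2πit}`. If `a, b, c` lie on the unit circle, `abc = 1` and `1 + a + b + c = 0`, then
conjugating gives `ab + bc + ca = -1` as well, so `a, b, c` are the roots of
`X³ + X² - X - 1 = (X - 1)(X + 1)²`. Hence `m_D̃(x) = 0` exactly when `e(u), e(v) ∈ {±1}` are not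
both `1`, and `Θᵢ` is precisely the set where `e(u) = (-1)^(i % 2)` and `e(v) = (-1)^(i / 2)`.
-/

open Real FourierTransform

theorem Real.fourierChar_eq_fourierChar_iff {s t : ℝ} :
    𝐞 s = 𝐞 t ↔ ∃ n : ℤ, s = t + n := by
  rw [fourierChar_apply', fourierChar_apply', Circle.exp_eq_exp]
  refine exists_congr fun n => ⟨fun h => ?_, fun h => by rw [h]; ring⟩
  have : 2 * π * (s - (t + n)) = 0 := by linear_combination h
  simpa [pi_ne_zero, sub_eq_zero] using this

theorem Real.coe_fourierChar_two_inv : (𝐞 2⁻¹ : ℂ) = -1 := by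
  rw [fourierChar_apply, ← Complex.exp_pi_mul_I]
  push_cast
  ring_nf

theorem eq_one_or_eq_neg_one_of_vieta {R : Type*} [CommRing R] [IsDomain R] {a b c : R}
    (h₁ : a + b + c = -1) (h₂ : a * b + b * c + c * a = -1) (h₃ : a * b * c = 1) :
    a = 1 ∨ a = -1 := by
  have : (a - 1) * (a + 1) ^ 2 = 0 := by
    linear_combination a ^ 2 * h₁ - a * h₂ + h₃
  rcases mul_eq_zero.mp this with h | h
  · exact Or.inl (sub_eq_zero.mp h)
  · exact Or.inr (eq_neg_of_add_eq_zero_left (pow_eq_zero_iff two_ne_zero |>.mp h))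

theorem Circle.one_add_add_add_coe_inv_mul_eq_zero_iff (a b : Circle) :
    1 + (a : ℂ) + b + ↑(a * b)⁻¹ = 0 ↔
      ((a : ℂ) = -1 ∧ (b : ℂ) = 1) ∨ ((a : ℂ) = 1 ∧ (b : ℂ) = -1) ∨
        ((a : ℂ) = -1 ∧ (b : ℂ) = -1) := by
  set c := (a * b)⁻¹
  have habc : (a : ℂ) * b * c = 1 := by simp [c]; field_simp
  constructor
  · intro h
    have h₁ : (a : ℂ) + b + c = -1 := by linear_combination h
    have h₂ : (a : ℂ) * b + b * c + c * a = -1 := by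
      have := congrArg (starRingEnd ℂ) h
      simp only [map_add, map_one, map_zero, ← coe_inv_eq_conj, coe_inv] at this
      field_simp at this
      linear_combination this - habc
    have ha := eq_one_or_eq_neg_one_of_vieta h₁ h₂ habc
    have hb := eq_one_or_eq_neg_one_of_vieta (a := (b : ℂ)) (b := c) (c := a)
      (by linear_combination h₁) (by linear_combination h₂) (by linear_combination habc)
    rcases ha with ha | ha <;> rcases hb with hb | hb
    · rw [ha, hb] at habc h₁
      norm_num [(by linear_combination habc : (c : ℂ) = 1)] at h₁
    all_goals tauto
  · have hc : (c : ℂ) = (a : ℂ)⁻¹ * (b : ℂ)⁻¹ := by simp [c, mul_comm]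
    rintro (⟨ha, hb⟩ | ⟨ha, hb⟩ | ⟨ha, hb⟩) <;> rw [hc, ha, hb] <;> norm_num

theorem maskPoly_eq {n : ℕ} (D : Finset (Fin n → ℝ)) (x : Fin n → ℝ) :
    maskPoly D x = (D.card : ℂ)⁻¹ * ∑ d ∈ D, (𝐞 (d ⬝ᵥ x) : ℂ) := by
  unfold maskPoly
  congr 1
  refine Finset.sum_congr rfl fun d _ => ?_
  rw [fourierChar_apply, dotProduct]
  push_cast
  ring_nf

theorem maskPoly_eq_zero_iff {n : ℕ} {D : Finset (Fin n → ℝ)} (hD : D.Nonempty)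
    (x : Fin n → ℝ) : maskPoly D x = 0 ↔ ∑ d ∈ D, (𝐞 (d ⬝ᵥ x) : ℂ) = 0 := by
  simp [maskPoly_eq, hD.ne_empty]

theorem maskPoly_eq_zero_iff_of_linearIndependent {n : ℕ} {p q : Fin n → ℝ}
    (hpq : LinearIndependent ℝ ![p, q]) (x : Fin n → ℝ) :
    maskPoly {0, p, q, -p - q} x = 0 ↔
      ((𝐞 (p ⬝ᵥ x) : ℂ) = -1 ∧ (𝐞 (q ⬝ᵥ x) : ℂ) = 1) ∨
        ((𝐞 (p ⬝ᵥ x) : ℂ) = 1 ∧ (𝐞 (q ⬝ᵥ x) : ℂ) = -1) ∨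
          ((𝐞 (p ⬝ᵥ x) : ℂ) = -1 ∧ (𝐞 (q ⬝ᵥ x) : ℂ) = -1) := by
  have hind := LinearIndependent.pair_iff.mp hpq
  have hp : p ≠ 0 := fun h => by simpa using hind 1 0 (by simp [h])
  have hq : q ≠ 0 := fun h => by simpa using hind 0 1 (by simp [h])
  have hpq₀ : -p - q ≠ 0 := fun h => by simpa using hind 1 1 (by rw [← neg_eq_zero, ← h]; module)
  have hpq₁ : p ≠ q := fun h => by simpa using hind 1 (-1) (by simp [h])
  have hpq₂ : p ≠ -p - q := fun h => by simpa using hind 2 1 (by rw [← sub_eq_zero.mpr h]; module)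
  have hpq₃ : q ≠ -p - q := fun h => by simpa using hind 1 2 (by rw [← sub_eq_zero.mpr h]; module)
  rw [maskPoly_eq_zero_iff (Finset.insert_nonempty _ _),
    Finset.sum_insert (by simp [hp.symm, hq.symm, hpq₀.symm]),
    Finset.sum_insert (by simp [hpq₁, hpq₂]), Finset.sum_insert (by simp [hpq₃]),
    Finset.sum_singleton, zero_dotProduct, sub_dotProduct, neg_dotProduct, ← neg_add',
    AddChar.map_zero_eq_one, AddChar.map_neg_eq_inv, AddChar.map_add_eq_mul, Circle.coe_one,
    ← add_assoc, ← add_assoc, Circle.one_add_add_add_coe_inv_mul_eq_zero_iff]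

theorem linearIndependent_vecCons_two {a b c : ℝ} (ha : a ≠ 0) (hc : c ≠ 0) :
    LinearIndependent ℝ ![![a, 0], ![b, c]] := by
  refine LinearIndependent.pair_iff.mpr fun s t h => ?_
  have h₀ := congrFun h 0
  have h₁ := congrFun h 1
  simp [hc] at h₀ h₁
  simp_all

theorem intCast_vecCons_two (a b : ℤ) : intCast ![a, b] = ![(a : ℝ), b] := by
  ext i; fin_cases i <;> rfl

theorem image_intCast_digits (α β ω : ℤ) (η : ℕ) :
    ({![0, 0], ![α, 0], ![ω, 2 ^ η * β], ![-α - ω, -(2 ^ η * β)]} :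
        Finset (Fin 2 → ℤ)).image intCast =
      {0, ![(α : ℝ), 0], ![(ω : ℝ), 2 ^ η * β], -![(α : ℝ), 0] - ![(ω : ℝ), 2 ^ η * β]} := by
  have h₀ : ![(0 : ℝ), 0] = 0 := by ext i; fin_cases i <;> rfl
  have h₃ : ![((-α - ω : ℤ) : ℝ), ((-(2 ^ η * β) : ℤ) : ℝ)] =
      -![(α : ℝ), 0] - ![(ω : ℝ), 2 ^ η * β] := by
    ext i; fin_cases i <;> simp
  simp only [Finset.image_insert, Finset.image_singleton, intCast_vecCons_two, Int.cast_zero,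
    h₀, h₃]
  push_cast
  rfl

theorem mem_thetaSet_iff {α β : ℤ} (hα : α ≠ 0) (hβ : β ≠ 0) (ω : ℤ) (η : ℕ) (i : Fin 4)
    (x : Fin 2 → ℝ) :
    x ∈ thetaSet α β ω η i ↔
      𝐞 (α * x 0) = 𝐞 ((i.val % 2 : ℕ) / 2) ∧
        𝐞 (ω * x 0 + 2 ^ η * β * x 1) = 𝐞 ((i.val / 2 : ℕ) / 2) := by
  simp only [thetaSet, Set.mem_ofPred_eq, fourierChar_eq_fourierChar_iff]
  generalize i.val % 2 = δ, i.val / 2 = ε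
  constructor
  · rintro ⟨k, k', rfl⟩
    refine ⟨⟨k, ?_⟩, ⟨k', ?_⟩⟩ <;> simp [intCast] <;> field_simp <;> ring
  · rintro ⟨⟨k, hk⟩, ⟨k', hk'⟩⟩
    refine ⟨k, k', ?_⟩
    ext j; fin_cases j <;> simp [intCast] <;> field_simp
    · linear_combination 2 ^ (η + 1) * hk
    · linear_combination 2 * α * hk' - 2 * ω * hk

theorem zero_set_of_mask_polynomial
    (α β ω : ℤ) (hα : Odd α) (hβ : Odd β) (η : ℕ)
    (Dt : Finset (Fin 2 → ℤ))
    (hDt : Dt = {![0, 0], ![α, 0], ![ω, 2 ^ η * β], ![-α - ω, -(2 ^ η * β)]}) :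
    {x : Fin 2 → ℝ | maskPoly (Dt.image intCast) x = 0} =
      thetaSet α β ω η 1 ∪ thetaSet α β ω η 2 ∪ thetaSet α β ω η 3 := by
  have hα₀ : α ≠ 0 := by rintro rfl; simp at hα
  have hβ₀ : β ≠ 0 := by rintro rfl; simp at hβ
  have hpq : LinearIndependent ℝ ![![(α : ℝ), 0], ![(ω : ℝ), 2 ^ η * β]] :=
    linearIndependent_vecCons_two (by exact_mod_cast hα₀) (by positivity)
  ext x
  rw [Set.mem_ofPred, hDt, image_intCast_digits, maskPoly_eq_zero_iff_of_linearIndependent hpq,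
    Set.mem_union, Set.mem_union, mem_thetaSet_iff hα₀ hβ₀, mem_thetaSet_iff hα₀ hβ₀,
    mem_thetaSet_iff hα₀ hβ₀]
  simp [← Circle.coe_inj, coe_fourierChar_two_inv, or_assoc, dotProduct, Fin.sum_univ_two]
end
end

section
/- Let α, β be odd integers, ω ∈ ℤ, η ≥ 0 an integer, and let D̃ = {(0,0)ᵗ, (α,0)ᵗ, (ω, 2^η β)ᵗ, (−α−ω, −2^η β)ᵗ} ⊂ ℤ². Then for every i ∈ {0,1,2,3}, the difference set Θᵢ − Θᵢ is disjoint from Z(m_D̃), i.e. (Θᵢ − Θᵢ) ∩ Z(m_D̃) = ∅. -/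
open MeasureTheory Matrix Complex
open scoped ENNReal

noncomputable section

/-!
Every element of `Θᵢ - Θᵢ` has the form `N⁻¹ • v` with `N = 2^{η+1}αβ` and `v ∈ ℤ²`, and
`N` divides `⟨d, v⟩` for each of the four digits `d ∈ D̃`. Hence all the exponentials in
`m_D̃(a - b)` equal `1`, so `m_D̃(a - b) = 1`.
-/

lemma maskPoly_eq_one_of_forall_int {n : ℕ} {D : Finset (Fin n → ℝ)} (hD : D.Nonempty)
    {x : Fin n → ℝ} (h : ∀ d ∈ D, ∃ t : ℤ, ∑ i, d i * x i = t) : maskPoly D x = 1 := by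
  have hexp : ∀ d ∈ D,
      Complex.exp (2 * Real.pi * Complex.I * Complex.ofReal (∑ i, d i * x i)) = 1 := by
    intro d hd
    obtain ⟨t, ht⟩ := h d hd
    rw [ht, ← Complex.exp_int_mul_two_pi_mul_I t]
    push_cast
    ring_nf
  have hcard : (D.card : ℂ) ≠ 0 := by exact_mod_cast hD.card_pos.ne'
  rw [maskPoly, Finset.sum_congr rfl hexp, Finset.sum_const, nsmul_one]
  exact inv_mul_cancel₀ hcard

lemma sum_intCast_mul_smul_intCast {n : ℕ} (d v : Fin n → ℤ) (c : ℝ) :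
    ∑ i, intCast d i * (c • intCast v) i = c * ((∑ i, d i * v i : ℤ) : ℝ) := by
  simp only [intCast, Pi.smul_apply, smul_eq_mul, Int.cast_sum, Int.cast_mul, Finset.mul_sum]
  exact Finset.sum_congr rfl fun _ _ => by ring

lemma exists_int_eq_inv_mul_of_dvd {N z : ℤ} (h : N ∣ z) : ∃ t : ℤ, (N : ℝ)⁻¹ * z = t := by
  obtain ⟨t, rfl⟩ := h
  rcases eq_or_ne N 0 with rfl | hN
  · exact ⟨0, by simp⟩
  · exact ⟨t, by push_cast; field_simp⟩

lemma exists_int_sum_mul_inv_smul_of_dvd {n : ℕ} {N : ℤ} {d v : Fin n → ℤ}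
    (h : N ∣ ∑ i, d i * v i) : ∃ t : ℤ, ∑ i, intCast d i * ((N : ℝ)⁻¹ • intCast v) i = t := by
  rw [sum_intCast_mul_smul_intCast]
  exact exists_int_eq_inv_mul_of_dvd h

section Theta

variable {α β ω : ℤ} {η : ℕ}

lemma exists_sub_eq_of_mem_thetaSet {i : Fin 4} {a b : Fin 2 → ℝ}
    (ha : a ∈ thetaSet α β ω η i) (hb : b ∈ thetaSet α β ω η i) :
    ∃ m m' : ℤ, a - b = ((2 ^ (η + 1) * α * β : ℤ) : ℝ)⁻¹ •
      intCast ![2 ^ (η + 1) * m * β, 2 * m' * α - 2 * m * ω] := by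
  obtain ⟨k, k', rfl⟩ := ha
  obtain ⟨l, l', rfl⟩ := hb
  refine ⟨k - l, k' - l', ?_⟩
  ext j
  fin_cases j <;> simp [intCast] <;> ring

lemma dvd_sum_digit_mul {m m' : ℤ} {e : Fin 2 → ℤ}
    (he : e ∈ ({![0, 0], ![α, 0], ![ω, 2 ^ η * β], ![-α - ω, -(2 ^ η * β)]} :
      Finset (Fin 2 → ℤ))) :
    2 ^ (η + 1) * α * β ∣ ∑ i, e i * ![2 ^ (η + 1) * m * β, 2 * m' * α - 2 * m * ω] i := by
  simp only [Finset.mem_insert, Finset.mem_singleton] at he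
  rcases he with rfl | rfl | rfl | rfl <;> simp only [Fin.sum_univ_two, Matrix.cons_val_zero,
    Matrix.cons_val_one]
  · exact ⟨0, by ring⟩
  · exact ⟨m, by ring⟩
  · exact ⟨m', by ring⟩
  · exact ⟨-m - m', by ring⟩

end Theta

theorem theta_difference_avoids_zero_set_general
    (α β ω : ℤ) (η : ℕ)
    (Dt : Finset (Fin 2 → ℤ))
    (hDt : Dt = {![0, 0], ![α, 0], ![ω, 2 ^ η * β], ![-α - ω, -(2 ^ η * β)]}) :
    ∀ i : Fin 4, ∀ a ∈ thetaSet α β ω η i, ∀ b ∈ thetaSet α β ω η i,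
      maskPoly (Dt.image intCast) (a - b) ≠ 0 := by
  intro i a ha b hb
  obtain ⟨m, m', hab⟩ := exists_sub_eq_of_mem_thetaSet ha hb
  have hne : (Dt.image intCast).Nonempty := by simp [hDt]
  have hpair : ∀ d ∈ Dt.image intCast, ∃ t : ℤ, ∑ j, d j * (a - b) j = t := by
    intro d hd
    obtain ⟨e, he, rfl⟩ := Finset.mem_image.mp hd
    rw [hab]
    exact exists_int_sum_mul_inv_smul_of_dvd (dvd_sum_digit_mul (hDt ▸ he))
  rw [maskPoly_eq_one_of_forall_int hne hpair]
  exact one_ne_zero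

theorem theta_difference_avoids_zero_set
    (α β ω : ℤ) (hα : Odd α) (hβ : Odd β) (η : ℕ)
    (Dt : Finset (Fin 2 → ℤ))
    (hDt : Dt = {![0, 0], ![α, 0], ![ω, 2 ^ η * β], ![-α - ω, -(2 ^ η * β)]}) :
    ∀ i : Fin 4, ∀ a ∈ thetaSet α β ω η i, ∀ b ∈ thetaSet α β ω η i,
      maskPoly (Dt.image intCast) (a - b) ≠ 0 :=
  theta_difference_avoids_zero_set_general α β ω η Dt hDt
end
end

section
/- Let α, β be odd integers, ω ∈ ℤ, η ≥ 0 an integer, and let D̃ = {(0,0)ᵗ, (α,0)ᵗ, (ω, 2^η β)ᵗ, (−α−ω, −2^η β)ᵗ} ⊂ ℤ². Then for all distinct i, j ∈ {0,1,2,3}, the difference set Θᵢ − Θⱼ is contained in Z(m_D̃). -/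
open MeasureTheory Matrix Complex
open scoped ENNReal

noncomputable section

/-!
Write `u = (α, 0)` and `v = (ω, 2^η β)`, so that `D̃ = {0, u, v, -u-v}`, four distinct
points since `u` and `v` are independent. A point of `Θᵢ` is
`(2^η m β, n α - m ω)/(2^{η+1} α β)` with `m ≡ i`, `n ≡ ⌊i/2⌋ mod 2`, and its inner products with
`u` and `v` are `m/2` and `n/2`. So for `x ∈ Θᵢ - Θⱼ` we get `⟨u, x⟩ = p/2`, `⟨v, x⟩ = q/2` with
`p` or `q` odd as `i ≠ j`, and `m_D̃(x) = (1 + (-1)^p)(1 + (-1)^q)/4 = 0`.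
-/

lemma intCast_injective {n : ℕ} : Function.Injective (intCast (n := n)) :=
  fun _ _ h => funext fun i => Int.cast_injective (congrFun h i)

lemma intCast_zero {n : ℕ} : intCast (0 : Fin n → ℤ) = 0 := by
  funext i
  simp [intCast]

lemma intCast_sub {n : ℕ} (v w : Fin n → ℤ) : intCast (v - w) = intCast v - intCast w := by
  funext i
  simp [intCast]

lemma intCast_neg {n : ℕ} (v : Fin n → ℤ) : intCast (-v) = -intCast v := by
  funext i
  simp [intCast]

lemma exp_two_pi_I_mul_half_int (m : ℤ) :
    Complex.exp (2 * Real.pi * Complex.I * Complex.ofReal ((m : ℝ) / 2)) = (-1 : ℂ) ^ m := by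
  rw [← Complex.exp_pi_mul_I, ← Complex.exp_int_mul]
  push_cast
  ring_nf

lemma neg_one_zpow_neg_sub (p q : ℤ) : (-1 : ℂ) ^ (-p - q) = (-1) ^ p * (-1) ^ q := by
  rw [← zpow_add₀ (by norm_num), show -p - q = p + q + 2 * (-(p + q)) by ring,
    zpow_add₀ (by norm_num), _root_.zpow_mul]
  norm_num

lemma maskPoly_image_intCast {n : ℕ} (D : Finset (Fin n → ℤ)) (x : Fin n → ℝ) :
    maskPoly (D.image intCast) x =
      (D.card : ℂ)⁻¹ * ∑ d ∈ D, Complex.exp (2 * Real.pi * Complex.I * ↑(intCast d ⬝ᵥ x)) := by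
  rw [maskPoly, Finset.card_image_of_injective _ intCast_injective,
    Finset.sum_image fun _ _ _ _ h => intCast_injective h]
  rfl

lemma Finset.sum_quad_eq_of_linearIndependent {M N : Type*} [AddCommGroup M] [DecidableEq M]
    [AddCommMonoid N] {u v : M} (huv : LinearIndependent ℤ ![u, v]) (f : M → N) :
    ∑ d ∈ ({0, u, v, -u - v} : Finset M), f d = f 0 + (f u + (f v + f (-u - v))) := by
  have indep := LinearIndependent.pair_iff.mp huv
  have h0u : (0 : M) ≠ u := fun h => by simpa using indep 1 0 (by simp [← h])
  have h0v : (0 : M) ≠ v := fun h => by simpa using indep 0 1 (by simp [← h])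
  have h0uv : (0 : M) ≠ -u - v := fun h => by
    simpa using indep 1 1 (by rw [one_smul, one_smul, ← neg_neg (u + v), neg_add', ← h, neg_zero])
  have huv' : u ≠ v := fun h => by simpa using indep 1 (-1) (by simp [h])
  have hu_uv : u ≠ -u - v := fun h => by
    simpa using indep 2 1 (by rw [two_smul, one_smul]; nth_rewrite 2 [h]; abel)
  have hv_uv : v ≠ -u - v := fun h => by
    simpa using indep 1 2 (by rw [two_smul, one_smul]; nth_rewrite 2 [h]; abel)
  rw [sum_insert (by simp [h0u, h0v, h0uv]), sum_insert (by simp [huv', hu_uv]),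
    sum_insert (by simp [hv_uv]), sum_singleton]

lemma maskPoly_eq_zero_of_dotProduct_half_odd {n : ℕ} {u v : Fin n → ℤ}
    (huv : LinearIndependent ℤ ![u, v]) {x : Fin n → ℝ} {p q : ℤ}
    (hu : intCast u ⬝ᵥ x = p / 2) (hv : intCast v ⬝ᵥ x = q / 2) (hpq : Odd p ∨ Odd q) :
    maskPoly (({0, u, v, -u - v} : Finset (Fin n → ℤ)).image intCast) x = 0 := by
  have h0 : intCast (0 : Fin n → ℤ) ⬝ᵥ x = ((0 : ℤ) : ℝ) / 2 := by
    simp [intCast_zero]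
  have hw : intCast (-u - v) ⬝ᵥ x = ((-p - q : ℤ) : ℝ) / 2 := by
    rw [intCast_sub, intCast_neg, sub_dotProduct, neg_dotProduct, hu, hv]
    push_cast
    ring
  rw [maskPoly_image_intCast, Finset.sum_quad_eq_of_linearIndependent huv, h0, hu, hv, hw]
  simp only [exp_two_pi_I_mul_half_int, neg_one_zpow_neg_sub]
  refine mul_eq_zero_of_right _ ?_
  rcases hpq with hp | hq
  · linear_combination (1 + (-1 : ℂ) ^ q) * hp.neg_one_zpow (α := ℂ)
  · linear_combination (1 + (-1 : ℂ) ^ p) * hq.neg_one_zpow (α := ℂ)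

lemma linearIndependent_pair_triangular {R : Type*} [CommRing R] [NoZeroDivisors R] {a b d : R}
    (ha : a ≠ 0) (hd : d ≠ 0) : LinearIndependent R ![![a, 0], ![b, d]] := by
  refine LinearIndependent.pair_iff.mpr fun s t h => ?_
  have h0 := congrFun h 0
  have h1 := congrFun h 1
  simp only [Pi.add_apply, Pi.smul_apply, smul_eq_mul, Pi.zero_apply, Matrix.cons_val_zero,
    Matrix.cons_val_one, mul_zero, zero_add] at h0 h1
  have ht : t = 0 := (mul_eq_zero.mp h1).resolve_right hd
  subst ht
  exact ⟨(mul_eq_zero.mp (by simpa using h0)).resolve_right ha, rfl⟩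

section Theta

variable (α β ω : ℤ) (η : ℕ)

def thetaPoint (m n : ℤ) : Fin 2 → ℝ :=
  ((2 : ℝ) ^ (η + 1) * (α : ℝ) * (β : ℝ))⁻¹ • intCast ![2 ^ η * m * β, n * α - m * ω]

lemma mem_thetaSet {i : Fin 4} {a : Fin 2 → ℝ} :
    a ∈ thetaSet α β ω η i ↔ ∃ k k' : ℤ,
      a = thetaPoint α β ω η (2 * k + ((i.val % 2 : ℕ) : ℤ)) (2 * k' + ((i.val / 2 : ℕ) : ℤ)) :=
  Iff.rfl

variable {α β}

lemma intCast_dotProduct_thetaPoint_fst (hα : α ≠ 0) (hβ : β ≠ 0) (m n : ℤ) :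
    intCast ![α, 0] ⬝ᵥ thetaPoint α β ω η m n = m / 2 := by
  simp only [thetaPoint, intCast, dotProduct, Fin.sum_univ_two, Pi.smul_apply, smul_eq_mul,
    cons_val_zero, cons_val_one, cons_val_fin_one]
  push_cast
  field_simp
  ring

lemma intCast_dotProduct_thetaPoint_snd (hα : α ≠ 0) (hβ : β ≠ 0) (m n : ℤ) :
    intCast ![ω, 2 ^ η * β] ⬝ᵥ thetaPoint α β ω η m n = n / 2 := by
  simp only [thetaPoint, intCast, dotProduct, Fin.sum_univ_two, Pi.smul_apply, smul_eq_mul,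
    cons_val_zero, cons_val_one, cons_val_fin_one]
  push_cast
  field_simp
  ring

end Theta

lemma odd_or_odd_of_ne {i j : Fin 4} (hij : i ≠ j) (k k' l l' : ℤ) :
    Odd (2 * k + ((i.val % 2 : ℕ) : ℤ) - (2 * l + ((j.val % 2 : ℕ) : ℤ))) ∨
      Odd (2 * k' + ((i.val / 2 : ℕ) : ℤ) - (2 * l' + ((j.val / 2 : ℕ) : ℤ))) := by
  have := Fin.val_ne_of_ne hij
  rw [Int.odd_iff, Int.odd_iff]
  omega

theorem theta_cross_difference_in_zero_set
    (α β ω : ℤ) (hα : Odd α) (hβ : Odd β) (η : ℕ)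
    (Dt : Finset (Fin 2 → ℤ))
    (hDt : Dt = {![0, 0], ![α, 0], ![ω, 2 ^ η * β], ![-α - ω, -(2 ^ η * β)]}) :
    ∀ i j : Fin 4, i ≠ j → ∀ a ∈ thetaSet α β ω η i, ∀ b ∈ thetaSet α β ω η j,
      maskPoly (Dt.image intCast) (a - b) = 0 := by
  intro i j hij a ha b hb
  obtain ⟨k, k', rfl⟩ := (mem_thetaSet α β ω η).mp ha
  obtain ⟨l, l', rfl⟩ := (mem_thetaSet α β ω η).mp hb
  have hα0 : α ≠ 0 := by rintro rfl; simp at hα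
  have hβ0 : β ≠ 0 := by rintro rfl; simp at hβ
  have hzero : (![0, 0] : Fin 2 → ℤ) = 0 := by simp
  have hsum : ![-α - ω, -(2 ^ η * β)] = -![α, 0] - ![ω, 2 ^ η * β] := by simp
  rw [hDt, hzero, hsum]
  refine maskPoly_eq_zero_of_dotProduct_half_odd (linearIndependent_pair_triangular hα0 ?_) ?_ ?_
    (odd_or_odd_of_ne hij k k' l l')
  · exact mul_ne_zero (pow_ne_zero η two_ne_zero) hβ0
  · rw [dotProduct_sub, intCast_dotProduct_thetaPoint_fst ω η hα0 hβ0,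
      intCast_dotProduct_thetaPoint_fst ω η hα0 hβ0]
    push_cast
    ring
  · rw [dotProduct_sub, intCast_dotProduct_thetaPoint_snd ω η hα0 hβ0,
      intCast_dotProduct_thetaPoint_snd ω η hα0 hβ0]
    push_cast
    ring


end
end

section
/- Let α, β be positive odd integers, ω ∈ ℤ, η ≥ 0 an integer, and let D̃ = {(0,0)ᵗ, (α,0)ᵗ, (ω, 2^η β)ᵗ, (−α−ω, −2^η β)ᵗ} ⊂ ℤ². Let A = 2^{η+1}αβ·I ∈ M₂(ℤ). For any choice of ℓ₀ ∈ T_{η,0}, ℓ₁ ∈ T_{η,1}, ℓ₂ ∈ T_{η,2}, ℓ₃ ∈ T_{η,3}, set C = {2^{η+1}αβ·ℓ₀, 2^{η+1}αβ·ℓ₁, 2^{η+1}αβ·ℓ₂, 2^{η+1}αβ·ℓ₃} ⊂ ℤ². Then (δ_{A⁻¹D̃}, C) is a spectral pair, i.e. {e^{2πi⟨c,x⟩} : c ∈ C} is an orthonormal basis of L²(δ_{A⁻¹D̃}). -/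
open MeasureTheory Matrix Complex
open scoped ENNReal

noncomputable section

/-- The sets `T_{η,0}, T_{η,1}, T_{η,2}, T_{η,3}` associated with positive odd
integers `α, β`, `ω ∈ ℤ` and `η ≥ 0`:
`T_{η,i} = {(2^η(2k+δᵢ)β, (2k'+εᵢ)α − (2k+δᵢ)ω)ᵗ/(2^{η+1}αβ) : 0 ≤ k < α, 0 ≤ k' < 2^η β}`
where `δᵢ = i % 2` and `εᵢ = i / 2`. -/
def Tset (α β ω : ℤ) (η : ℕ) (i : Fin 4) : Set (Fin 2 → ℝ) :=
  { v | ∃ k k' : ℤ, 0 ≤ k ∧ k < α ∧ 0 ≤ k' ∧ k' < 2 ^ η * β ∧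
      v = ((2 : ℝ) ^ (η + 1) * (α : ℝ) * (β : ℝ))⁻¹ •
        intCast ![2 ^ η * (2 * k + ((i.val % 2 : ℕ) : ℤ)) * β,
          (2 * k' + ((i.val / 2 : ℕ) : ℤ)) * α - (2 * k + ((i.val % 2 : ℕ) : ℤ)) * ω] }

/-! The frequencies `N ℓᵢ` (`N = 2^{η+1}αβ`) are integer vectors whose pairing with the digits
`d ∈ D̃` is `N/2` times an integer of the parity `bitDot i j`; hence the matrix
`(e^{2πi⟨N ℓᵢ, N⁻¹dⱼ⟩})ᵢⱼ = ((-1)^{bitDot i j})ᵢⱼ` is the Sylvester–Hadamard matrix of order 4.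
Orthogonality of its rows makes the four exponentials orthonormal in `L²(δ_{N⁻¹D̃})`, and since
`L²` of a measure carried by four points has dimension at most four, they form a basis. -/

open ComplexConjugate

section FinitelySupported

variable {X 𝕜 : Type*} [MeasurableSpace X] [MeasurableSingletonClass X] [NormedField 𝕜]
  {p : ℝ≥0∞} {μ : Measure X} [IsFiniteMeasure μ]

theorem span_indicatorConstLp_singleton_eq_top {P : Finset X} (hP : ∀ᵐ y ∂μ, y ∈ P) :
    Submodule.span 𝕜 (Set.range fun x : P =>
      indicatorConstLp p (measurableSet_singleton x.1) (measure_ne_top μ _) (1 : 𝕜)) = ⊤ := by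
  set e : P → Lp 𝕜 p μ := fun x =>
    indicatorConstLp p (measurableSet_singleton x.1) (measure_ne_top μ _) (1 : 𝕜)
  refine Submodule.eq_top_iff'.2 fun f => ?_
  have hf : f = ∑ x : P, f x • e x := by
    refine Lp.ext ?_
    have he : ∀ᵐ y ∂μ, ∀ x : P,
        ((f x • e x : Lp 𝕜 p μ) : X → 𝕜) y = f x * ({x.1} : Set X).indicator 1 y :=
      ae_all_iff.2 fun x => by
        filter_upwards [Lp.coeFn_smul (f x) (e x),
          indicatorConstLp_coeFn (p := p) (hs := measurableSet_singleton x.1)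
            (hμs := measure_ne_top μ _) (c := (1 : 𝕜))] with y h1 h2
        rw [h1, Pi.smul_apply, h2, smul_eq_mul]; rfl
    filter_upwards [hP, Lp.coeFn_finsetSum Finset.univ fun x : P => f x • e x, he]
      with y hy hsum hey
    rw [hsum, Finset.sum_apply, Finset.sum_congr rfl fun x _ => hey x,
      Finset.sum_eq_single ⟨y, hy⟩ (fun x _ hx => ?_) (by simp)]
    · simp
    · rw [Set.indicator_of_notMem, mul_zero]
      exact fun h => hx (Subtype.ext h.symm)
  rw [hf]
  exact Submodule.sum_mem _ fun x _ => Submodule.smul_mem _ _ (Submodule.subset_span ⟨x, rfl⟩)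

theorem finiteDimensional_Lp_of_ae_mem {P : Finset X} (hP : ∀ᵐ y ∂μ, y ∈ P) :
    FiniteDimensional 𝕜 (Lp 𝕜 p μ) :=
  Module.finite_def.2 <| (span_indicatorConstLp_singleton_eq_top (𝕜 := 𝕜) (p := p) hP) ▸
    Submodule.fg_span (Set.finite_range _)

theorem finrank_Lp_le_card_of_ae_mem {P : Finset X} (hP : ∀ᵐ y ∂μ, y ∈ P) :
    Module.finrank 𝕜 (Lp 𝕜 p μ) ≤ P.card := by
  rw [← finrank_top, ← span_indicatorConstLp_singleton_eq_top (p := p) hP]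
  exact (finrank_range_le_card _).trans (Fintype.card_coe P).le

end FinitelySupported

theorem integral_smul_sum_dirac {X E ι : Type*} [MeasurableSpace X] [MeasurableSingletonClass X]
    [NormedAddCommGroup E] [NormedSpace ℝ E] [CompleteSpace E] [Fintype ι]
    (a : ℝ≥0∞) (x : ι → X) (f : X → E) :
    ∫ y, f y ∂(a • ∑ k, Measure.dirac (x k)) = a.toReal • ∑ k, f (x k) := by
  rw [integral_smul_measure, integral_finsetSum_measure fun k _ => integrable_dirac enorm_lt_top]
  simp only [integral_dirac]

theorem ae_mem_image_of_smul_sum_dirac {X ι : Type*} [MeasurableSpace X]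
    [MeasurableSingletonClass X] [DecidableEq X] [Fintype ι] (a : ℝ≥0∞) (x : ι → X) :
    ∀ᵐ y ∂(a • ∑ k, Measure.dirac (x k)), y ∈ Finset.univ.image x :=
  Measure.ae_smul_measure (ae_finsetSum_measure_iff.2 fun k _ =>
    (ae_dirac_iff (Finset.measurableSet _)).2 (Finset.mem_image_of_mem x (Finset.mem_univ k))) a

section Exponentials

variable {n : ℕ}

theorem continuous_expChar (l : Fin n → ℝ) : Continuous (expChar l) := by
  unfold expChar; fun_prop

theorem norm_expChar (l x : Fin n → ℝ) : ‖expChar l x‖ = 1 := by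
  rw [expChar, ← Complex.ofReal_ofNat, mul_comm _ Complex.I, ← Complex.ofReal_mul, mul_assoc,
    ← Complex.ofReal_mul, mul_comm]
  exact Complex.norm_exp_ofReal_mul_I _

theorem conj_expChar_mul_self (l x : Fin n → ℝ) : conj (expChar l x) * expChar l x = 1 := by
  rw [← Complex.normSq_eq_conj_mul_self, Complex.normSq_eq_norm_sq, norm_expChar]; norm_num

theorem memLp_expChar (μ : Measure (Fin n → ℝ)) [IsFiniteMeasure μ] (p : ℝ≥0∞)
    (l : Fin n → ℝ) : MemLp (expChar l) p μ :=
  MemLp.of_bound (continuous_expChar l).aestronglyMeasurable 1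
    (Filter.Eventually.of_forall fun x => (norm_expChar l x).le)

theorem inner_toLp_expChar (μ : Measure (Fin n → ℝ)) [IsFiniteMeasure μ] (l l' : Fin n → ℝ) :
    inner ℂ ((memLp_expChar μ 2 l).toLp) ((memLp_expChar μ 2 l').toLp) =
      ∫ x, conj (expChar l x) * expChar l' x ∂μ := by
  rw [L2.inner_def]
  refine integral_congr_ae ?_
  filter_upwards [(memLp_expChar μ 2 l).coeFn_toLp, (memLp_expChar μ 2 l').coeFn_toLp]
    with x h h'
  rw [RCLike.inner_apply, h, h', mul_comm]

theorem expChar_intCast_inv_smul_intCast {N : ℤ} (hN : N ≠ 0) {v d : Fin n → ℤ}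
    {q : ℤ} {r : ℕ} (h : 2 * (v ⬝ᵥ d) = (2 * q + r) * N) :
    expChar (intCast v) ((N : ℝ)⁻¹ • intCast d) = (-1) ^ r := by
  have hsum : ∑ i, intCast v i * ((N : ℝ)⁻¹ • intCast d) i = q + r / 2 := by
    have h' : 2 * ∑ i, (v i : ℝ) * d i = (2 * q + r) * N := by exact_mod_cast h
    simp only [intCast, Pi.smul_apply, smul_eq_mul, mul_left_comm _ (N : ℝ)⁻¹, ← Finset.mul_sum]
    field_simp
    linarith
  rw [expChar, hsum, Complex.ofReal_add, Complex.ofReal_intCast, Complex.ofReal_div,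
    Complex.ofReal_natCast, Complex.ofReal_ofNat, mul_add,
    show 2 * (Real.pi : ℂ) * I * q = q * (2 * Real.pi * I) by ring,
    show 2 * (Real.pi : ℂ) * I * (r / 2) = r * (Real.pi * I) by ring,
    Complex.exp_add, Complex.exp_int_mul_two_pi_mul_I, Complex.exp_nat_mul,
    Complex.exp_pi_mul_I, one_mul]

theorem isSpectrum_of_sum_conj_mul_expChar_eq_zero {ι κ : Type*} [Fintype ι] [Fintype κ]
    (x : ι → Fin n → ℝ) (c : κ → Fin n → ℝ) (hcard : Fintype.card κ = Fintype.card ι)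
    (horth : ∀ i j, i ≠ j → ∑ k, conj (expChar (c i) (x k)) * expChar (c j) (x k) = 0) :
    IsSpectrum ((Fintype.card ι : ℝ≥0∞)⁻¹ • ∑ k, Measure.dirac (x k)) (Set.range c) := by
  classical
  set μ := (Fintype.card ι : ℝ≥0∞)⁻¹ • ∑ k, Measure.dirac (x k)
  have hpos : ∀ i : κ, 0 < Fintype.card ι := fun i => hcard ▸ Fintype.card_pos_iff.2 ⟨i⟩
  have : IsFiniteMeasure μ := by
    constructor
    simp [μ, lt_top_iff_ne_top]
  have hgram : ∀ i j,
      inner ℂ ((memLp_expChar μ 2 (c i)).toLp) ((memLp_expChar μ 2 (c j)).toLp) =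
        if i = j then 1 else 0 := by
    intro i j
    rw [inner_toLp_expChar, integral_smul_sum_dirac, ENNReal.toReal_inv, ENNReal.toReal_natCast]
    split_ifs with h
    · subst h
      simp only [conj_expChar_mul_self, Finset.sum_const, Finset.card_univ, nsmul_eq_mul, mul_one]
      rw [Complex.real_smul, Complex.ofReal_inv, Complex.ofReal_natCast]
      exact inv_mul_cancel₀ (by exact_mod_cast (hpos i).ne')
    · rw [horth i j h, smul_zero]
  have hc : Function.Injective c := by
    intro i j hij
    by_contra h
    have := hgram i j
    rw [if_neg h, hij, hgram, if_pos rfl] at this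
    exact one_ne_zero this
  let b : Set.range c → Lp ℂ 2 μ := fun l => (memLp_expChar μ 2 l).toLp
  have hb : Orthonormal ℂ b := by
    rw [orthonormal_iff_ite]
    rintro ⟨_, i, rfl⟩ ⟨_, j, rfl⟩
    by_cases h : i = j
    · subst h
      exact (hgram i i).trans (if_pos rfl) |>.trans (if_pos rfl).symm
    · exact (hgram i j).trans (if_neg h) |>.trans
        (if_neg fun h' => h (hc (congrArg Subtype.val h'))).symm
  refine ⟨b, fun l => (memLp_expChar μ 2 l).coeFn_toLp, hb, ?_⟩
  have hP := ae_mem_image_of_smul_sum_dirac (Fintype.card ι : ℝ≥0∞)⁻¹ x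
  have : FiniteDimensional ℂ (Lp ℂ 2 μ) := finiteDimensional_Lp_of_ae_mem hP
  have hcard_eq : Fintype.card (Set.range c) = Module.finrank ℂ (Lp ℂ 2 μ) := by
    refine le_antisymm hb.linearIndependent.fintype_card_le_finrank ?_
    rw [Set.card_range_of_injective hc, hcard]
    exact (finrank_Lp_le_card_of_ae_mem hP).trans (Finset.card_image_le.trans_eq Finset.card_univ)
  rw [hb.linearIndependent.span_eq_top_of_card_eq_finrank' hcard_eq]
  exact eq_top_iff.2 (Submodule.le_topologicalClosure _)

end Exponentials

def digit (α β ω : ℤ) (η : ℕ) : Fin 4 → Fin 2 → ℤ :=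
  ![![0, 0], ![α, 0], ![ω, 2 ^ η * β], ![-α - ω, -(2 ^ η * β)]]

def bitDot (i j : Fin 4) : ℕ := i.val % 2 * (j.val % 2) + i.val / 2 * (j.val / 2)

theorem sum_neg_one_pow_bitDot_add_eq_zero {i j : Fin 4} (h : i ≠ j) :
    ∑ k, (-1 : ℤ) ^ (bitDot i k + bitDot j k) = 0 := by
  revert i j; decide

theorem digit_injective {α β ω : ℤ} {η : ℕ} (hα : α ≠ 0) (hβ : β ≠ 0) :
    Function.Injective (digit α β ω η) := by
  have hP : (2 : ℤ) ^ η * β ≠ 0 := mul_ne_zero (pow_ne_zero _ two_ne_zero) hβ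
  intro i j h
  have h0 := congrFun h 0
  have h1 := congrFun h 1
  fin_cases i <;> fin_cases j <;> simp [digit] at h0 h1 ⊢ <;> omega

theorem expChar_smul_digit {α β ω : ℤ} {η : ℕ} (hα : α ≠ 0) (hβ : β ≠ 0) {i : Fin 4}
    {l : Fin 2 → ℝ} (hl : l ∈ Tset α β ω η i) (j : Fin 4) :
    expChar (((2 : ℝ) ^ (η + 1) * α * β) • l)
        (((2 : ℝ) ^ (η + 1) * α * β)⁻¹ • intCast (digit α β ω η j)) = (-1) ^ bitDot i j := by
  obtain ⟨k, k', -, -, -, -, rfl⟩ := hl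
  have hN : (2 : ℤ) ^ (η + 1) * α * β ≠ 0 := by positivity
  have hNcast : ((2 ^ (η + 1) * α * β : ℤ) : ℝ) = (2 : ℝ) ^ (η + 1) * α * β := by push_cast; rfl
  rw [smul_smul, mul_inv_cancel₀ (hNcast ▸ Int.cast_ne_zero.2 hN), one_smul, ← hNcast]
  fin_cases j
  · exact expChar_intCast_inv_smul_intCast hN (q := 0) (by simp [digit, bitDot])
  · exact expChar_intCast_inv_smul_intCast hN (q := k) (by simp [digit, bitDot, dotProduct]; ring)
  · exact expChar_intCast_inv_smul_intCast hN (q := k') (by simp [digit, bitDot, dotProduct]; ring)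
  · exact expChar_intCast_inv_smul_intCast hN (q := -k - k' - (i.val % 2 : ℕ) - (i.val / 2 : ℕ))
      (by simp [digit, bitDot, dotProduct]; ring)

theorem uniform_measure_spectral_pair_general
    (α β ω : ℤ) (hαpos : 0 < α) (hβpos : 0 < β) (η : ℕ)
    (Dt : Finset (Fin 2 → ℤ))
    (hDt : Dt = {![0, 0], ![α, 0], ![ω, 2 ^ η * β], ![-α - ω, -(2 ^ η * β)]})
    (l : Fin 4 → (Fin 2 → ℝ)) (hl : ∀ i, l i ∈ Tset α β ω η i) :
    IsSpectrum
      ((Dt.card : ℝ≥0∞)⁻¹ • ∑ d ∈ Dt,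
        Measure.dirac (((2 : ℝ) ^ (η + 1) * (α : ℝ) * (β : ℝ))⁻¹ • intCast d))
      (Set.range fun i => ((2 : ℝ) ^ (η + 1) * (α : ℝ) * (β : ℝ)) • l i) := by
  have hdigit := digit_injective (ω := ω) (η := η) hαpos.ne' hβpos.ne'
  have hDt_image : Dt = Finset.univ.image (digit α β ω η) := by
    rw [hDt]; simp [Finset.image, digit, Fin.univ_succ]
  rw [hDt_image, Finset.card_image_of_injective _ hdigit,
    Finset.sum_image fun i _ j _ h => hdigit h]
  refine isSpectrum_of_sum_conj_mul_expChar_eq_zero _ _ rfl fun i j hij => ?_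
  simp only [expChar_smul_digit hαpos.ne' hβpos.ne' (hl _), map_pow, map_neg, map_one, ← pow_add]
  exact_mod_cast sum_neg_one_pow_bitDot_add_eq_zero hij

theorem uniform_measure_spectral_pair
    (α β ω : ℤ) (hα : Odd α) (hβ : Odd β) (hαpos : 0 < α) (hβpos : 0 < β) (η : ℕ)
    (Dt : Finset (Fin 2 → ℤ))
    (hDt : Dt = {![0, 0], ![α, 0], ![ω, 2 ^ η * β], ![-α - ω, -(2 ^ η * β)]})
    (l : Fin 4 → (Fin 2 → ℝ)) (hl : ∀ i, l i ∈ Tset α β ω η i) :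
    IsSpectrum
      ((Dt.card : ℝ≥0∞)⁻¹ • ∑ d ∈ Dt,
        Measure.dirac (((2 : ℝ) ^ (η + 1) * (α : ℝ) * (β : ℝ))⁻¹ • intCast d))
      (Set.range fun i => ((2 : ℝ) ^ (η + 1) * (α : ℝ) * (β : ℝ)) • l i) :=
  uniform_measure_spectral_pair_general α β ω hαpos hβpos η Dt hDt l hl
end
end

section
/- Let α, β be positive odd integers, ω ∈ ℤ, and η ≥ 0 an integer. Then S_η ⊕ 2^{η+1}αβ·T_η is a complete residue system modulo 2^{η+1}αβ·ℤ²: for every z ∈ ℤ² there exist unique s ∈ S_η, ℓ ∈ T_η and γ ∈ ℤ² such that z = s + 2^{η+1}αβ·ℓ + 2^{η+1}αβ·γ. -/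
open MeasureTheory Matrix Complex
open scoped ENNReal

noncomputable section

/-!
Parametrise `⋃ T_{η,i}` by `ℓ = (2^η β q, α p - ω q) / (2^{η+1} α β)` with `0 ≤ q < 2α` and
`0 ≤ p < 2^{η+1} β`. Since `2^{η+1} α β = 2^η β · 2α = α · 2^{η+1} β`, the first coordinate of
`z = s + 2^{η+1}αβ (ℓ + γ)` is the mixed-radix expansion `z₁ = s₁ + 2^η β q + 2^η β · 2α · γ₁`,
which determines `s₁, q, γ₁`; the second then reads `z₂ + ω q = s₂ + α p + α · 2^{η+1} β · γ₂`,
which determines `s₂, p, γ₂`.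
-/

lemma mixedRadix_iff {B A z r a g : ℤ} (hB : 0 < B) (hA : 0 < A) :
    (0 ≤ r ∧ r < B) ∧ (0 ≤ a ∧ a < A) ∧ z = r + B * a + B * A * g ↔
      r = z % B ∧ a = z / B % A ∧ g = z / B / A := by
  constructor
  · rintro ⟨⟨hr0, hrB⟩, ⟨ha0, haA⟩, hz⟩
    obtain ⟨hzB, hzr⟩ := (Int.ediv_emod_unique hB).2
      ⟨(by rw [hz]; ring : r + B * (a + A * g) = z), hr0, hrB⟩
    obtain ⟨hzBA, hza⟩ := (Int.ediv_emod_unique hA).2 ⟨hzB.symm, ha0, haA⟩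
    exact ⟨hzr.symm, hza.symm, hzBA.symm⟩
  · rintro ⟨rfl, rfl, rfl⟩
    refine ⟨⟨Int.emod_nonneg _ hB.ne', Int.emod_lt_of_pos _ hB⟩,
      ⟨Int.emod_nonneg _ hA.ne', Int.emod_lt_of_pos _ hA⟩, ?_⟩
    linear_combination -(Int.emod_add_mul_ediv z B) - B * Int.emod_add_mul_ediv (z / B) A

lemma sheared_mixedRadix_iff {B A ω : ℤ} (hB : 0 < B) (hA : 0 < A)
    {z s g : Fin 2 → ℤ} {q p : ℤ} :
    (0 ≤ s 0 ∧ s 0 < B ∧ 0 ≤ s 1 ∧ s 1 < A) ∧ (0 ≤ q ∧ q < 2 * A) ∧ (0 ≤ p ∧ p < 2 * B) ∧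
        z = s + ![B * q, A * p - ω * q] + (2 * A * B) • g ↔
      q = z 0 / B % (2 * A) ∧ p = (z 1 + ω * q) / A % (2 * B) ∧
        s = ![z 0 % B, (z 1 + ω * q) % A] ∧
        g = ![z 0 / B / (2 * A), (z 1 + ω * q) / A / (2 * B)] := by
  have hz_iff : z = s + ![B * q, A * p - ω * q] + (2 * A * B) • g ↔
      z 0 = s 0 + B * q + B * (2 * A) * g 0 ∧
        z 1 + ω * q = s 1 + A * p + A * (2 * B) * g 1 := by
    simp only [funext_iff, Fin.forall_fin_two, Pi.add_apply, Pi.smul_apply, smul_eq_mul,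
      Matrix.cons_val_zero, Matrix.cons_val_one]
    constructor <;> rintro ⟨h0, h1⟩ <;> constructor <;> linarith
  have h0 := mixedRadix_iff (z := z 0) (r := s 0) (a := q) (g := g 0) hB (by omega : 0 < 2 * A)
  have h1 := mixedRadix_iff (z := z 1 + ω * q) (r := s 1) (a := p) (g := g 1) hA
    (by omega : 0 < 2 * B)
  simp only [hz_iff, funext_iff, Fin.forall_fin_two, Matrix.cons_val_zero, Matrix.cons_val_one]
  constructor
  · rintro ⟨⟨hs0, hsB, hs1, hsA⟩, hq, hp, hz0, hz1⟩
    obtain ⟨hs0, hq, hg0⟩ := h0.1 ⟨⟨hs0, hsB⟩, hq, hz0⟩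
    obtain ⟨hs1, hp, hg1⟩ := h1.1 ⟨⟨hs1, hsA⟩, hp, hz1⟩
    exact ⟨hq, hp, ⟨hs0, hs1⟩, hg0, hg1⟩
  · rintro ⟨hq, hp, ⟨hs0, hs1⟩, hg0, hg1⟩
    obtain ⟨⟨hs0, hsB⟩, hq, hz0⟩ := h0.2 ⟨hs0, hq, hg0⟩
    obtain ⟨⟨hs1, hsA⟩, hp, hz1⟩ := h1.2 ⟨hs1, hp, hg1⟩
    exact ⟨⟨hs0, hsB, hs1, hsA⟩, hq, hp, hz0, hz1⟩

lemma intCast_add_smul_inv_smul_eq_iff {n : ℕ} {N : ℤ} (hN : N ≠ 0) {z s t g : Fin n → ℤ} :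
    intCast z = intCast s + (N : ℝ) • ((N : ℝ)⁻¹ • intCast t) + (N : ℝ) • intCast g ↔
      z = s + t + N • g := by
  rw [smul_inv_smul₀ (Int.cast_ne_zero.2 hN)]
  simp only [funext_iff, intCast, Pi.add_apply, Pi.smul_apply, smul_eq_mul]
  exact_mod_cast Iff.rfl

lemma mem_iUnion_Tset_iff {α β ω : ℤ} {η : ℕ} {v : Fin 2 → ℝ} :
    v ∈ ⋃ i, Tset α β ω η i ↔
      ∃ q p : ℤ, (0 ≤ q ∧ q < 2 * α) ∧ (0 ≤ p ∧ p < 2 * (2 ^ η * β)) ∧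
      v = ((2 : ℝ) ^ (η + 1) * α * β)⁻¹ • intCast ![2 ^ η * β * q, α * p - ω * q] := by
  simp only [Set.mem_iUnion, Tset, Set.mem_ofPred_eq]
  constructor
  · rintro ⟨i, k, k', hk, hkα, hk', hk'β, rfl⟩
    refine ⟨2 * k + (i.val % 2 : ℕ), 2 * k' + (i.val / 2 : ℕ), by omega, ⟨by omega, ?_⟩, ?_⟩
    · have := i.isLt; omega
    · congr 3
      · ring
      · congr 1; ring
  · rintro ⟨q, p, hq, hp, rfl⟩
    obtain ⟨k, d, hd, rfl⟩ : ∃ k d : ℤ, (d = 0 ∨ d = 1) ∧ q = 2 * k + d :=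
      ⟨q / 2, q % 2, by omega, by omega⟩
    obtain ⟨k', e, he, rfl⟩ : ∃ k e : ℤ, (e = 0 ∨ e = 1) ∧ p = 2 * k + e :=
      ⟨p / 2, p % 2, by omega, by omega⟩
    -- the parities `d, e` of `q, p` select the piece `T_{η,d+2e}`
    refine ⟨⟨d.toNat + 2 * e.toNat, by omega⟩, k, k', by omega, by omega, by omega, by omega,
      ?_⟩
    have hd' : (((d.toNat + 2 * e.toNat) % 2 : ℕ) : ℤ) = d := by omega
    have he' : (((d.toNat + 2 * e.toNat) / 2 : ℕ) : ℤ) = e := by omega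
    simp only [hd', he']
    congr 3
    · ring
    · congr 1; ring

theorem complete_residue_system_general
    (α β ω : ℤ) (hαpos : 0 < α) (hβpos : 0 < β) (η : ℕ) :
    ∀ z : Fin 2 → ℤ,
      ∃! w : (Fin 2 → ℤ) × (Fin 2 → ℝ) × (Fin 2 → ℤ),
        (0 ≤ w.1 0 ∧ w.1 0 < 2 ^ η * β ∧ 0 ≤ w.1 1 ∧ w.1 1 < α) ∧
        (w.2.1 ∈ ⋃ i : Fin 4, Tset α β ω η i) ∧
        intCast z = intCast w.1 + ((2 : ℝ) ^ (η + 1) * (α : ℝ) * (β : ℝ)) • w.2.1 +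
          ((2 : ℝ) ^ (η + 1) * (α : ℝ) * (β : ℝ)) • intCast w.2.2 := by
  intro z
  have hB : 0 < 2 ^ η * β := by positivity
  have hN : (2 : ℝ) ^ (η + 1) * α * β = ((2 * α * (2 ^ η * β) : ℤ) : ℝ) := by push_cast; ring
  have hN0 : 2 * α * (2 ^ η * β) ≠ 0 := by positivity
  set q := z 0 / (2 ^ η * β) % (2 * α)
  set p := (z 1 + ω * q) / α % (2 * (2 ^ η * β))
  obtain ⟨hs, hq, hp, hz⟩ :=
    (sheared_mixedRadix_iff (ω := ω) (z := z) (q := q) (p := p) hB hαpos).2 ⟨rfl, rfl, rfl, rfl⟩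
  refine ⟨(![z 0 % (2 ^ η * β), (z 1 + ω * q) % α],
      ((2 : ℝ) ^ (η + 1) * α * β)⁻¹ • intCast ![2 ^ η * β * q, α * p - ω * q],
      ![z 0 / (2 ^ η * β) / (2 * α), (z 1 + ω * q) / α / (2 * (2 ^ η * β))]),
    ⟨hs, mem_iUnion_Tset_iff.2 ⟨q, p, hq, hp, rfl⟩, ?_⟩, ?_⟩
  · rw [hN, intCast_add_smul_inv_smul_eq_iff hN0]
    exact hz
  · rintro ⟨s, v, g⟩ ⟨hs, hv, hz⟩
    obtain ⟨q', p', hq', hp', rfl⟩ := mem_iUnion_Tset_iff.1 hv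
    rw [hN, intCast_add_smul_inv_smul_eq_iff hN0] at hz
    obtain ⟨rfl, rfl, rfl, rfl⟩ := (sheared_mixedRadix_iff hB hαpos).1 ⟨hs, hq', hp', hz⟩
    rfl

theorem complete_residue_system
    (α β ω : ℤ) (hα : Odd α) (hβ : Odd β) (hαpos : 0 < α) (hβpos : 0 < β) (η : ℕ) :
    ∀ z : Fin 2 → ℤ,
      ∃! w : (Fin 2 → ℤ) × (Fin 2 → ℝ) × (Fin 2 → ℤ),
        (0 ≤ w.1 0 ∧ w.1 0 < 2 ^ η * β ∧ 0 ≤ w.1 1 ∧ w.1 1 < α) ∧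
        (w.2.1 ∈ ⋃ i : Fin 4, Tset α β ω η i) ∧
        intCast z = intCast w.1 + ((2 : ℝ) ^ (η + 1) * (α : ℝ) * (β : ℝ)) • w.2.1 +
          ((2 : ℝ) ^ (η + 1) * (α : ℝ) * (β : ℝ)) • intCast w.2.2 :=
  complete_residue_system_general α β ω hαpos hβpos η

end
end
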